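/- arXiv:1405.6939 — 5 statements merged into one kernel-verified Lean document; each statement's English description precedes it below -/
import Mathlib

section
/- (Lemma read-over-weakeq, semantic form.) Let α be a type with decidable equality, β a type, i : α, and let a, b : α → β be weakly equivalent modulo i. Then a i = b i. -/
/-- One-step relation avoiding index `i`: `a` and `b` differ by a single store
at an index `j ≠ i`. -/
def stepMod {α β : Type*} [DecidableEq α] (i : α) (a b : α → β) : Prop :=
  ∃ j : α, j ≠ i ∧ ∃ v : β,
    a = Function.update b j v ∨ b = Function.update a j v

/-- `a` and `b` are weakly equivalent modulo `i`. -/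
def WeakEqMod {α β : Type*} [DecidableEq α] (i : α) (a b : α → β) : Prop :=
  Relation.ReflTransGen (stepMod i) a b

theorem read_over_weakeq {α β : Type*} [DecidableEq α] (i : α)
    (a b : α → β) (h : WeakEqMod i a b) : a i = b i := by
  induction h with
  | refl => rfl
  | tail _ hstep ih =>
    obtain ⟨j, hj, v, hc | hc⟩ := hstep <;>
      rw [ih, hc] <;> simp [Function.update_of_ne (Ne.symm hj)]
end

section
/- (Lemma weakeq-ext, semantic form.) Let α be a type with decidable equality, β a type, S a set of indices, and let a, b : α → β be connected via store indices in S. If for every index i ∈ S the arrays a and b are weakly congruent modulo i, then a = b. -/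
/-- One-step relation with store index in `S`. -/
def stepSet {α β : Type*} [DecidableEq α] (S : Set α) (a b : α → β) : Prop :=
  ∃ j ∈ S, ∃ v : β,
    a = Function.update b j v ∨ b = Function.update a j v

/-- `a` and `b` are connected via store indices in `S`. -/
def ConnectedVia {α β : Type*} [DecidableEq α] (S : Set α) (a b : α → β) : Prop :=
  Relation.ReflTransGen (stepSet S) a b

/-- `a` and `b` are weakly congruent modulo `i`. -/
def WeakCongMod {α β : Type*} [DecidableEq α] (i : α) (a b : α → β) : Prop :=
  WeakEqMod i a b ∨
    ∃ a' b' : α → β, WeakEqMod i a a' ∧ a' i = b' i ∧ WeakEqMod i b' b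

lemma weakEqMod_apply {α β : Type*} [DecidableEq α] {i : α} {a b : α → β}
    (h : WeakEqMod i a b) : a i = b i := by
  induction h with
  | refl => rfl
  | tail _ hstep ih =>
    obtain ⟨j, hj, v, h1 | h1⟩ := hstep <;> rw [ih, h1] <;>
      simp [Function.update_of_ne (Ne.symm hj)]

lemma weakCongMod_apply {α β : Type*} [DecidableEq α] {i : α} {a b : α → β}
    (h : WeakCongMod i a b) : a i = b i := by
  rcases h with h | ⟨a', b', h1, h2, h3⟩
  · exact weakEqMod_apply h
  · rw [weakEqMod_apply h1, h2, weakEqMod_apply h3]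

lemma connectedVia_apply {α β : Type*} [DecidableEq α] {S : Set α} {a b : α → β}
    (h : ConnectedVia S a b) {j : α} (hj : j ∉ S) : a j = b j := by
  induction h with
  | refl => rfl
  | tail _ hstep ih =>
    obtain ⟨k, hk, v, h1 | h1⟩ := hstep <;> rw [ih, h1] <;>
      rw [Function.update_of_ne (show j ≠ k from fun e => hj (e ▸ hk))]

theorem weakeq_ext {α β : Type*} [DecidableEq α] (S : Set α)
    (a b : α → β) (h : ConnectedVia S a b)
    (hcong : ∀ i ∈ S, WeakCongMod i a b) : a = b := by
  funext j
  by_cases hj : j ∈ S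
  · exact weakCongMod_apply (hcong j hj)
  · exact connectedVia_apply h hj
end

section
/- (Extensionality criterion along a weak-equivalence path.) Let α be a type with decidable equality, β a type, S a set of indices, and let a, b : α → β be connected via store indices in S. Then a = b if and only if a i = b i for every index i ∈ S. -/
lemma agree_outside {α β : Type*} [DecidableEq α] (S : Set α)
    (a b : α → β) (h : ConnectedVia S a b) : ∀ i ∉ S, a i = b i := by
  induction h with
  | refl => intro i _; rfl
  | tail _ hstep ih =>
    intro i hi
    obtain ⟨j, hj, v, hcase⟩ := hstep
    have hij : i ≠ j := fun e => hi (e ▸ hj)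
    cases hcase with
    | inl hc => rw [ih i hi, hc, Function.update_of_ne hij]
    | inr hc => rw [ih i hi, hc, Function.update_of_ne hij]

theorem ext_along_path {α β : Type*} [DecidableEq α] (S : Set α)
    (a b : α → β) (h : ConnectedVia S a b) :
    a = b ↔ ∀ i ∈ S, a i = b i := by
  constructor
  · intro he i _; rw [he]
  · intro hs
    funext i
    by_cases hi : i ∈ S
    · exact hs i hi
    · exact agree_outside S a b h i hi
end

section
/- (Path decomposition at the first and last i-edge.) Let α be a type with decidable equality, β a type, i : α, and let a, b : α → β be weakly equivalent but not weakly equivalent modulo i. Then there exist arrays a', b' : α → β such that a is weakly equivalent modulo i to a', b' is weakly equivalent modulo i to b, and both a' and b' are incident to a store edge on index i: there exist arrays c, d : α → β and values v, w : β with (a' = Function.update c i v or c = Function.update a' i v) and (b' = Function.update d i w or d = Function.update b' i w). -/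
/-- One-step store relation. -/
def step {α β : Type*} [DecidableEq α] (a b : α → β) : Prop :=
  ∃ j : α, ∃ v : β,
    a = Function.update b j v ∨ b = Function.update a j v

/-- `a` and `b` are weakly equivalent. -/
def WeakEq {α β : Type*} [DecidableEq α] (a b : α → β) : Prop :=
  Relation.ReflTransGen step a b

theorem path_decomposition {α β : Type*} [DecidableEq α] (i : α)
    (a b : α → β) (hweak : WeakEq a b) (hnot : ¬ WeakEqMod i a b) :
    ∃ a' b' : α → β, WeakEqMod i a a' ∧ WeakEqMod i b' b ∧
      (∃ (c : α → β) (v : β),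
        a' = Function.update c i v ∨ c = Function.update a' i v) ∧
      (∃ (d : α → β) (w : β),
        b' = Function.update d i w ∨ d = Function.update b' i w) := by
  induction hweak using Relation.ReflTransGen.head_induction_on with
  | refl => exact absurd Relation.ReflTransGen.refl hnot
  | @head a c hac hcb ih =>
    obtain ⟨j, v, hj⟩ := hac
    by_cases hji : j = i
    · rw [hji] at hj
      -- the first edge touches i: take a' = a
      by_cases hcb' : WeakEqMod i c b
      · -- then b' = c works: it is incident to the same i-edge
        exact ⟨a, c, Relation.ReflTransGen.refl, hcb', ⟨c, v, hj⟩, ⟨a, v, hj.symm⟩⟩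
      · obtain ⟨a', b', _, hb'b, _, hd⟩ := ih hcb'
        exact ⟨a, b', Relation.ReflTransGen.refl, hb'b, ⟨c, v, hj⟩, hd⟩
    · -- first edge avoids i
      have hstep : stepMod i a c := ⟨j, hji, v, hj⟩
      have hcb' : ¬ WeakEqMod i c b := fun h => hnot (Relation.ReflTransGen.head hstep h)
      obtain ⟨a', b', ha', hb'b, hc, hd⟩ := ih hcb'
      exact ⟨a', b', Relation.ReflTransGen.head hstep ha', hb'b, hc, hd⟩
end

section
/- (Distinct weakly equivalent arrays fail weak congruence at some store index.) Let α be a type with decidable equality, β a type, S a set of indices, and let a, b : α → β be connected via store indices in S with a ≠ b. Then there exists an index i ∈ S such that a and b are not weakly congruent modulo i. -/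
theorem exists_not_weakcong {α β : Type*} [DecidableEq α] (S : Set α)
    (a b : α → β) (h : ConnectedVia S a b) (hne : a ≠ b) :
    ∃ i ∈ S, ¬ WeakCongMod i a b := by
  have key : ∀ {x y : α → β} {i : α}, WeakEqMod i x y → x i = y i := by
    intro x y i hxy
    induction hxy with
    | refl => rfl
    | tail _ hstep ih =>
      obtain ⟨j, hj, v, hc | hc⟩ := hstep <;> rw [ih, hc] <;>
        simp [Function.update_of_ne hj.symm]
  have outside : ∀ {x y : α → β}, ConnectedVia S x y → ∀ j ∉ S, x j = y j := by
    intro x y hxy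
    induction hxy with
    | refl => intro j _; rfl
    | tail _ hstep ih =>
      intro j hj
      obtain ⟨k, hk, v, hc | hc⟩ := hstep <;> rw [ih j hj, hc] <;>
        simp [Function.update_of_ne (show j ≠ k from fun e => hj (e ▸ hk))]
  obtain ⟨i, hi⟩ := Function.ne_iff.mp hne
  refine ⟨i, ?_, ?_⟩
  · by_contra hiS
    exact hi (outside h i hiS)
  · rintro (hw | ⟨a', b', h1, h2, h3⟩)
    · exact hi (key hw)
    · exact hi ((key h1).trans (h2.trans (key h3)))
end
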